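/- Let n ≥ 8 be even with n/2 odd, G = D_{2n} the dihedral group of order 2n, H = ⟨a²⟩, and g ∈ ⟨a²⟩. If g = 1 then the graph Δ_{H,G}^g is not connected; if g ≠ 1 then Δ_{H,G}^g is connected and its diameter equals 2. -/

import Mathlib

/-!
Since `n/2` is odd, no nontrivial element of `H = ⟨a²⟩` is central, so the vertices are the
non-identity elements. The commutators of a rotation `a^i` are `1` and `a^{-2i}`.
For `g = 1`, the rotation `a` lies outside `H` and commutes with `H`, so it is an isolated vertex.
For `g ≠ 1`, one of `a²`, `a⁴` has commutators avoiding `g^{±1}` (otherwise `4 = 0` or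
`12 = 0` in `ℤ/n`), so it is adjacent to every other vertex: the graph is connected with
diameter at most `2`, and exactly `2` because the reflections `b` and `ab` lie outside `H`
and are not adjacent.
-/

open SimpleGraph

/-- `Z(H,G)`: the set of elements of `H` commuting with every element of `G`. -/
def relCenter (G : Type*) [Group G] (H : Subgroup G) : Set G :=
  {x : G | x ∈ H ∧ ∀ y : G, x * y = y * x}

/-- The commutator `[x,y] = x⁻¹y⁻¹xy`. -/
def comm' {G : Type*} [Group G] (x y : G) : G :=
  x⁻¹ * y⁻¹ * x * y

lemma comm'_swap {G : Type*} [Group G] (x y : G) :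
    comm' y x = (comm' x y)⁻¹ := by
  simp only [comm', mul_inv_rev, inv_inv, mul_assoc]

/-- `K(H,G) = {[x,y] : x ∈ H, y ∈ G}`. -/
def relComm (G : Type*) [Group G] (H : Subgroup G) : Set G :=
  {w : G | ∃ x ∈ H, ∃ y : G, comm' x y = w}

/-- The graph `Δ_{H,G}^g`: vertices are the elements of `G \ Z(H,G)`, and two distinct
vertices `x`, `y` are adjacent iff (`x ∈ H` or `y ∈ H`) and `[x,y] ≠ g, g⁻¹`. -/
def gnc (G : Type*) [Group G] (H : Subgroup G) (g : G) :
    SimpleGraph (((relCenter G H)ᶜ : Set G)) where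
  Adj x y := x ≠ y ∧ ((x : G) ∈ H ∨ (y : G) ∈ H) ∧
    comm' (x : G) (y : G) ≠ g ∧ comm' (x : G) (y : G) ≠ g⁻¹
  symm := by
    constructor
    rintro x y ⟨hxy, hH, h1, h2⟩
    refine ⟨fun h => hxy h.symm, hH.symm, ?_, ?_⟩
    · rw [comm'_swap, ne_eq, inv_eq_iff_eq_inv]
      exact h2
    · rw [comm'_swap, ne_eq, inv_eq_iff_eq_inv, inv_inv]
      exact h1
  loopless := by
    constructor
    rintro x ⟨h, -⟩
    exact h rfl

namespace SimpleGraph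

variable {V : Type*} {G : SimpleGraph V} {v : V}

lemma IsUniversal.ediam_le_two (h : G.IsUniversal v) : G.ediam ≤ 2 :=
  calc G.ediam ≤ 2 * G.eccent v := ediam_le_two_mul_eccent v
    _ ≤ 2 * 1 := by gcongr; exact (eccent_le_one_iff v).2 fun _ hvw ↦ h hvw
    _ = 2 := mul_one 2

lemma IsUniversal.diam_eq_two (h : G.IsUniversal v) (hG : G ≠ ⊤) : G.diam = 2 := by
  obtain ⟨x, y, hxy, -⟩ : ∃ x y, x ≠ y ∧ ¬ G.Adj x y := by
    simpa [eq_top_iff_forall_ne_adj] using hG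
  have : Nontrivial V := ⟨⟨x, y, hxy⟩⟩
  have h0 : G.ediam ≠ 0 := fun h0 ↦ not_subsingleton V (subsingleton_of_ediam_eq_zero h0)
  have h1 : G.ediam ≠ 1 := fun h1 ↦ hG (ediam_eq_one.1 h1)
  have h2 : G.ediam = 2 := by
    have hle := h.ediam_le_two
    lift G.ediam to ℕ using ne_top_of_le_ne_top (by decide) hle with d
    norm_cast at *
    omega
  rw [diam, h2]
  rfl

end SimpleGraph

section Commutation

variable {G : Type*} [Group G] {H : Subgroup G} {g : G}

lemma comm'_eq_one_of_commute {x y : G} (h : Commute x y) : comm' x y = 1 := by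
  rw [comm', mul_assoc, h.eq]
  group

lemma gnc_not_adj_of_notMem {x y : ((relCenter G H)ᶜ : Set G)} (hx : (x : G) ∉ H)
    (hy : (y : G) ∉ H) : ¬ (gnc G H g).Adj x y :=
  fun ⟨_, hxy, _⟩ ↦ hxy.elim hx hy

lemma gnc_ne_top {x y : ((relCenter G H)ᶜ : Set G)} (hxy : x ≠ y) (hx : (x : G) ∉ H)
    (hy : (y : G) ∉ H) : gnc G H g ≠ ⊤ :=
  fun htop ↦ gnc_not_adj_of_notMem hx hy (by rw [htop]; exact hxy)

lemma gnc_one_isIsolated {x : ((relCenter G H)ᶜ : Set G)} (hx : (x : G) ∉ H)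
    (hxH : ∀ y ∈ H, Commute (x : G) y) : (gnc G H 1).IsIsolated x :=
  fun y ⟨_, hxy, hc, _⟩ ↦ hc <| comm'_eq_one_of_commute <| hxy.elim (absurd · hx) (hxH y)

lemma gnc_isUniversal {x : ((relCenter G H)ᶜ : Set G)} (hx : (x : G) ∈ H)
    (hc : ∀ y : G, comm' (x : G) y ≠ g ∧ comm' (x : G) y ≠ g⁻¹) :
    (gnc G H g).IsUniversal x :=
  fun y hxy ↦ ⟨hxy, .inl hx, hc y⟩

end Commutation

namespace DihedralGroup

variable {n : ℕ}

@[simp]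
lemma r_eq_one_iff {i : ZMod n} : r i = 1 ↔ i = 0 := by
  rw [one_def, r.injEq]

@[simp]
lemma sr_ne_one (i : ZMod n) : sr i ≠ 1 := by
  rw [one_def]
  nofun

lemma mem_zpowers_r_one_sq_iff {y : DihedralGroup n} :
    y ∈ Subgroup.zpowers ((r 1 : DihedralGroup n) ^ 2) ↔ ∃ k : ZMod n, y = r (2 * k) := by
  have hpow (z : ℤ) : ((r 1 : DihedralGroup n) ^ 2) ^ z = r (2 * (z : ZMod n)) := by
    rw [← zpow_natCast, ← zpow_mul, r_one_zpow, Int.cast_mul, Nat.cast_ofNat, Int.cast_ofNat]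
  simp only [Subgroup.mem_zpowers_iff, hpow]
  constructor
  · rintro ⟨z, rfl⟩
    exact ⟨z, rfl⟩
  · rintro ⟨k, rfl⟩
    obtain ⟨z, rfl⟩ := ZMod.intCast_surjective k
    exact ⟨z, rfl⟩

lemma sr_notMem_zpowers_r_one_sq (j : ZMod n) :
    sr j ∉ Subgroup.zpowers ((r 1 : DihedralGroup n) ^ 2) := by
  rw [mem_zpowers_r_one_sq_iff]
  simp

lemma r_one_notMem_zpowers_r_one_sq (hn : Even n) :
    r 1 ∉ Subgroup.zpowers ((r 1 : DihedralGroup n) ^ 2) := by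
  rw [mem_zpowers_r_one_sq_iff]
  rintro ⟨k, hk⟩
  have h := congrArg (ZMod.castHom hn.two_dvd (ZMod 2)) (r.inj hk)
  rw [map_one, map_mul, map_ofNat, show (2 : ZMod 2) = 0 from rfl, zero_mul] at h
  exact one_ne_zero h

lemma comm'_r_eq_one_or (i : ZMod n) (y : DihedralGroup n) :
    comm' (r i) y = 1 ∨ comm' (r i) y = r (-(i + i)) := by
  cases y with
  | r j => left; simp only [comm', inv_r, r_mul_r, one_def]; ring_nf
  | sr j => right; simp only [comm', inv_r, inv_sr, r_mul_sr, sr_mul_r, sr_mul_sr]; ring_nf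

lemma relCenter_zpowers_r_one_sq (hn : Even n) (hodd : Odd (n / 2)) :
    relCenter (DihedralGroup n) (Subgroup.zpowers (r 1 ^ 2)) = {1} := by
  ext x
  refine ⟨fun ⟨hx, hcomm⟩ ↦ ?_, ?_⟩
  · obtain ⟨k, rfl⟩ := mem_zpowers_r_one_sq_iff.1 hx
    obtain ⟨t, ht⟩ := hodd
    have hn' : ((2 * (2 * t + 1) : ℕ) : ZMod n) = 0 := by
      rw [← ZMod.natCast_self n]
      congr 1
      obtain ⟨p, hp⟩ := hn
      omega
    have h4k : 2 * k + 2 * k = 0 := by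
      have := sr.inj (by simpa only [r_mul_sr, sr_mul_r] using hcomm (sr 0))
      linear_combination -this
    rw [Set.mem_singleton_iff, one_def]
    congr 1
    push_cast at hn'
    -- `2k = k·n - t·4k`, where `n = 2(2t + 1)`
    linear_combination k * hn' - t * h4k
  · rintro rfl
    exact ⟨one_mem _, fun y ↦ by simp⟩

end DihedralGroup

lemma ZMod.exists_two_mul_ne_zero_four_mul_ne {n : ℕ} (hn : 8 ≤ n) (hn12 : n ≠ 12)
    (m : ZMod n) :
    ∃ k : ZMod n, 2 * k ≠ 0 ∧ 4 * k ≠ m ∧ 4 * k ≠ -m := by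
  have hcast (a : ℕ) (ha : 0 < a) (ha2n : a < 2 * n) (han : a ≠ n) : (a : ZMod n) ≠ 0 := by
    rw [Ne, ZMod.natCast_eq_zero_iff]
    exact fun hdvd ↦ han (Nat.eq_of_dvd_of_lt_two_mul ha.ne' hdvd ha2n)
  have h2 : (2 : ZMod n) ≠ 0 := by exact_mod_cast hcast 2 (by omega) (by omega) (by omega)
  have h4 : (4 : ZMod n) ≠ 0 := by exact_mod_cast hcast 4 (by omega) (by omega) (by omega)
  have h12 : (12 : ZMod n) ≠ 0 := by exact_mod_cast hcast 12 (by omega) (by omega) hn12.symm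
  by_contra! H
  have hk (k : ZMod n) (h2k : 2 * k ≠ 0) : 4 * k = m ∨ 4 * k = -m := by
    have := H k h2k
    tauto
  -- 4 and 8 cannot both lie in `{m, -m}`: that would force `4 = 0` or `12 = 0`
  rcases hk 1 (by simpa using h2) with h₁ | h₁ <;>
    rcases hk 2 (by norm_num; exact h4) with h₂ | h₂
  · exact h4 (by linear_combination h₂ - h₁)
  · exact h12 (by linear_combination h₁ + h₂)
  · exact h12 (by linear_combination h₁ + h₂)
  · exact h4 (by linear_combination h₂ - h₁)

open DihedralGroup in
/-- for even `n ≥ 8` with `n/2` odd, `G = D_{2n}`, `H = ⟨a²⟩` and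
`g ∈ ⟨a²⟩`: if `g = 1` then `Δ_{H,G}^g` is not connected; if `g ≠ 1` then it is
connected with diameter `2`. -/
theorem stmt17 (n : ℕ) (hn : 8 ≤ n) (hne : Even n) (hodd : Odd (n / 2))
    (g : DihedralGroup n)
    (hg : g ∈ Subgroup.zpowers ((DihedralGroup.r 1 : DihedralGroup n) ^ 2)) :
    (g = 1 → ¬ (gnc (DihedralGroup n) (Subgroup.zpowers ((DihedralGroup.r 1 : DihedralGroup n) ^ 2)) g).Connected) ∧
    (g ≠ 1 → (gnc (DihedralGroup n) (Subgroup.zpowers ((DihedralGroup.r 1 : DihedralGroup n) ^ 2)) g).Connected ∧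
      (gnc (DihedralGroup n) (Subgroup.zpowers ((DihedralGroup.r 1 : DihedralGroup n) ^ 2)) g).diam = 2) := by
  have : Fact (1 < n) := ⟨by omega⟩
  have hvert {x : DihedralGroup n} (hx : x ≠ 1) :
      x ∈ (relCenter (DihedralGroup n) (Subgroup.zpowers (r 1 ^ 2)))ᶜ := by
    rwa [relCenter_zpowers_r_one_sq hne hodd, Set.mem_compl_singleton_iff]
  refine ⟨?_, fun hg1 ↦ ?_⟩
  · rintro rfl hconn
    have : Nontrivial ((relCenter (DihedralGroup n) (Subgroup.zpowers (r 1 ^ 2)))ᶜ : Set _) :=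
      ⟨⟨r 1, hvert (by simp)⟩, ⟨sr 0, hvert (by simp)⟩, by simp⟩
    refine hconn.preconnected.not_isIsolated ⟨r 1, hvert (by simp)⟩ <|
      gnc_one_isIsolated (r_one_notMem_zpowers_r_one_sq hne) fun y hy ↦ ?_
    obtain ⟨k, rfl⟩ := mem_zpowers_r_one_sq_iff.1 hy
    simp only [Commute, SemiconjBy, r_mul_r, add_comm]
  · obtain ⟨j, rfl⟩ := mem_zpowers_r_one_sq_iff.1 hg
    have hn12 : n ≠ 12 := by rintro rfl; exact absurd hodd (by decide)
    obtain ⟨k, hk0, hkj, hkj'⟩ := ZMod.exists_two_mul_ne_zero_four_mul_ne hn hn12 (2 * j)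
    have hcomm (y : DihedralGroup n) :
        comm' (r (2 * k)) y ≠ r (2 * j) ∧ comm' (r (2 * k)) y ≠ (r (2 * j))⁻¹ := by
      rw [inv_r]
      rcases comm'_r_eq_one_or (2 * k) y with h | h <;> rw [h]
      · exact ⟨Ne.symm hg1, Ne.symm (by simpa using hg1)⟩
      · refine ⟨fun h' ↦ hkj' ?_, fun h' ↦ hkj ?_⟩ <;> linear_combination -(r.inj h')
    have huniv := gnc_isUniversal (x := ⟨r (2 * k), hvert (by simpa using hk0)⟩)
      (mem_zpowers_r_one_sq_iff.2 ⟨k, rfl⟩) hcomm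
    have hntop := gnc_ne_top (g := r (2 * j)) (x := ⟨sr 0, hvert (by simp)⟩)
      (y := ⟨sr 1, hvert (by simp)⟩) (by simp) (sr_notMem_zpowers_r_one_sq 0)
      (sr_notMem_zpowers_r_one_sq 1)
    exact ⟨.of_isUniversal huniv, huniv.diam_eq_two hntop⟩
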